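/- If X is a second countable, locally compact topological space and Y is a second countable topological space, then the space Paro(X,Y) of paro maps X ⇀ Y, equipped with the compact-open topology, is second countable. -/

import Mathlib

/-!
STATEMENT 0. If `X` is a second countable, locally compact topological space and `Y` is a
second countable topological space, then the space `Paro(X,Y)` of paro maps `X ⇀ Y`
(partial continuous maps with open domain), equipped with the compact-open topology, is
second countable.

Following the context, `Paro(X,Y)` with its compact-open topology is (via the bijection `μ`)
by definition homeomorphic to `C(X, Y*)` with the compact-open topology, where
`Y* = Y ∪ {ω}` is topologized so that a set `U ⊆ Y*` is open iff `U = Y*` or `U` is open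
in `Y`.  We therefore formalize `Paro(X,Y)` as `C(X, ParoTarget Y)`.
-/

/-- `Y* = Y ∪ {ω}`, with `ω = none`. -/
def ParoTarget (Y : Type*) := Option Y

/-- The topology on `Y*`: a set `U` is open iff `U = Y*` or (`ω ∉ U` and) `U` is open in
`Y`. -/
instance ParoTarget.instTopologicalSpace (Y : Type*) [TopologicalSpace Y] :
    TopologicalSpace (ParoTarget Y) where
  IsOpen U := U = Set.univ ∨ (Option.none ∉ U ∧ IsOpen {y : Y | Option.some y ∈ U})
  isOpen_univ := Or.inl rfl
  isOpen_inter := by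
    rintro U V (rfl | ⟨hU, hU'⟩) hV
    · simpa using hV
    · rcases hV with rfl | ⟨hV, hV'⟩
      · right; simpa using ⟨hU, hU'⟩
      · right
        refine ⟨fun h => hU h.1, ?_⟩
        exact hU'.inter hV'
  isOpen_sUnion := by
    intro s hs
    by_cases h : ∃ U ∈ s, U = Set.univ
    · rcases h with ⟨U, hU, rfl⟩
      exact Or.inl (Set.eq_univ_of_univ_subset (Set.subset_sUnion_of_mem hU))
    · right
      push_neg at h
      constructor
      · rintro ⟨U, hU, hnU⟩
        exact ((hs U hU).resolve_left (h U hU)).1 hnU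
      · have : {y : Y | Option.some y ∈ ⋃₀ s} = ⋃ U ∈ s, {y : Y | Option.some y ∈ U} := by
          ext y; simp [Set.mem_sUnion]; rfl
        rw [this]
        exact isOpen_biUnion fun U hU => ((hs U hU).resolve_left (h U hU)).2

open TopologicalSpace in
instance ParoTarget.secondCountable (Y : Type*) [TopologicalSpace Y]
    [SecondCountableTopology Y] : SecondCountableTopology (ParoTarget Y) := by
  have hb : IsTopologicalBasis
      ((fun U => (Option.some '' U : Set (ParoTarget Y))) '' countableBasis Y ∪ {Set.univ}) := by
    apply isTopologicalBasis_of_isOpen_of_nhds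
    · rintro u (⟨V, hV, rfl⟩ | rfl)
      · right
        refine ⟨by rintro ⟨z, -, h⟩; exact Option.some_ne_none z h, ?_⟩
        have : {y : Y | Option.some y ∈ (Option.some '' V : Set (ParoTarget Y))} = V := by
          ext y; exact ⟨fun ⟨z, hz, h⟩ => Option.some.inj h ▸ hz, fun h => ⟨y, h, rfl⟩⟩
        rw [this]
        exact isOpen_of_mem_countableBasis hV
      · exact Or.inl rfl
    · intro a u ha hu
      rcases hu with rfl | ⟨hn, ho⟩
      · exact ⟨Set.univ, Or.inr rfl, trivial, le_rfl⟩
      · match a with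
        | Option.none => exact absurd ha hn
        | Option.some y =>
          obtain ⟨V, hV, hyV, hVu⟩ := (isBasis_countableBasis Y).exists_subset_of_mem_open ha ho
          exact ⟨Option.some '' V, Or.inl ⟨V, hV, rfl⟩, ⟨y, hyV, rfl⟩,
            by rintro _ ⟨z, hz, rfl⟩; exact hVu hz⟩
  exact hb.secondCountableTopology
    ((countable_countableBasis Y).image _ |>.union (Set.countable_singleton _))

/-- If `X` is second countable and locally compact, and `Y` is second
countable, then `Paro(X,Y) ≅ C(X, Y*)` with the compact-open topology is second
countable. -/
theorem paroMaps_secondCountableTopology (X Y : Type*) [TopologicalSpace X]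
    [TopologicalSpace Y] [SecondCountableTopology X] [LocallyCompactSpace X]
    [SecondCountableTopology Y] :
    SecondCountableTopology C(X, ParoTarget Y) := by
  infer_instance
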